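/- Let A be a DASL on a doset D and let I, J ⊆ D be doset order ideals. Then AI ∩ AJ = A(I ∩ J), where AI denotes the ring ideal generated by I. -/

import Mathlib

/-- Flatten a list of pairs `(α_1,α_2)(α_3,α_4)⋯` into the list `α_1,α_2,α_3,…`. -/
def flat {ι : Type*} (l : List (ι × ι)) : List ι := l.flatMap fun p => [p.1, p.2]

/-- Lexicographic `≤` on sequences of poset elements. -/
def lexLE {ι : Type*} [PartialOrder ι] (a b : List ι) : Prop :=
  a = b ∨ List.Lex (· < ·) a b

/-- The index type of standard monomials of a doset `D`: lists of pairs from `D`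
whose flattened sequence is weakly increasing. -/
def Std {ι : Type*} [PartialOrder ι] (D : Set (ι × ι)) : Type _ :=
  {l : List (ι × ι) // (∀ p ∈ l, p ∈ D) ∧ (flat l).Chain' (· ≤ ·)}

/-- A graded doset algebra with straightening law (DASL) on a doset `D ⊆ ι × ι`
over `B`. -/
structure DASL (B : Type*) [CommRing B] (A : Type*) [CommRing A] [Algebra B A]
    (ι : Type*) [PartialOrder ι] (D : Set (ι × ι))
    (𝒜 : ℕ → Submodule B A) [GradedAlgebra 𝒜] where
  doset_refl : ∀ a : ι, (a, a) ∈ D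
  doset_le : ∀ p ∈ D, p.1 ≤ p.2
  doset_trans : ∀ a b c : ι, a ≤ b → b ≤ c →
    ((a, c) ∈ D ↔ (a, b) ∈ D ∧ (b, c) ∈ D)
  /-- `A_0 = B`. -/
  zero_eq : 𝒜 0 = 1
  /-- The doset elements inside `A`. -/
  emb : ι × ι → A
  /-- Each doset element is homogeneous of positive degree. -/
  homog : ∀ p ∈ D, ∃ d, 0 < d ∧ emb p ∈ 𝒜 d
  /-- The doset generates `A` as a `B`-algebra. -/
  generates : Algebra.adjoin B (emb '' D) = ⊤
  /-- The standard monomials form a free `B`-module basis of `A`. -/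
  bas : Module.Basis (Std D) B A
  bas_eq : ∀ l : Std D, bas l = (l.1.map emb).prod
  /-- Condition (3): each standard monomial `N` appearing in the standard
  representation of a product `M` of doset elements satisfies: every permutation of
  the flattened sequence of `M` is lexicographically ≥ the flattened sequence of `N`. -/
  lex_cond : ∀ m : List (ι × ι), (∀ p ∈ m, p ∈ D) →
    ∀ N : Std D, bas.repr ((m.map emb).prod) N ≠ 0 →
      ∀ l' : List ι, l'.Perm (flat m) → lexLE (flat N.1) l'
  /-- Condition (4): if some permutation of the factors of `M` gives a standard
  monomial, that standard monomial appears with coefficient `±1`. -/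
  coeff_cond : ∀ m : List (ι × ι), (∀ p ∈ m, p ∈ D) →
    ∀ N : Std D, (flat N.1).Perm (flat m) →
      bas.repr ((m.map emb).prod) N = 1 ∨ bas.repr ((m.map emb).prod) N = -1

/-! The ring ideal `A·I` generated by a doset order ideal `I` is, as a `B`-module, spanned by the
standard monomials whose first factor lies in `I`: the straightening law rewrites `p · M`, for
`p ∈ I` and `M` standard, as a combination of standard monomials `N` with `flat N ≤ flat (p :: M)`
lexicographically, so the first factor of `N` lies below `p` and hence in `I` (the grading rules
out the empty monomial `N = 1`). Since the standard monomials form a basis, intersecting two such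
spans intersects the index sets, and a standard monomial has its first factor in `I` and in `J`
exactly when it lies in `I ∩ J`. -/

section

variable {B A ι : Type*} [CommRing B] [CommRing A] [Algebra B A] [PartialOrder ι]
  {D : Set (ι × ι)} {𝒜 : ℕ → Submodule B A} [GradedAlgebra 𝒜]

omit [PartialOrder ι] in
@[simp] lemma flat_cons (p : ι × ι) (l : List (ι × ι)) :
    flat (p :: l) = p.1 :: p.2 :: flat l := by simp [flat]

lemma lexLE.head_le {a b : ι} {l₁ l₂ : List ι} (h : lexLE (a :: l₁) (b :: l₂)) : a ≤ b := by
  rcases h with h | h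
  · exact (List.cons.inj h).1.le
  · cases h with
    | cons => exact le_rfl
    | rel h => exact h.le

namespace Std

def nil : Std D := ⟨[], by simp, List.isChain_nil⟩

lemma eq_nil_or_exists_cons (N : Std D) : N = nil ∨ ∃ r t, N.1 = r :: t := by
  rcases hN : N.1 with _ | ⟨r, t⟩
  · exact .inl (Subtype.ext hN)
  · exact .inr ⟨r, t, rfl⟩

def headIn (I : Set (ι × ι)) : Set (Std D) := {N | ∃ q t, N.1 = q :: t ∧ q ∈ I}

lemma headIn_inter (I J : Set (ι × ι)) :
    (headIn (I ∩ J) : Set (Std D)) = headIn I ∩ headIn J := by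
  ext N
  constructor
  · rintro ⟨q, t, hN, hqI, hqJ⟩
    exact ⟨⟨q, t, hN, hqI⟩, ⟨q, t, hN, hqJ⟩⟩
  · rintro ⟨⟨q, t, hN, hqI⟩, ⟨q', t', hN', hqJ⟩⟩
    obtain ⟨rfl, -⟩ := List.cons.inj (hN.symm.trans hN')
    exact ⟨q, t, hN, hqI, hqJ⟩

end Std

lemma Module.Basis.span_image_inter {R M κ : Type*} [Semiring R] [AddCommMonoid M] [Module R M]
    (b : Module.Basis κ R M) (s t : Set κ) :
    Submodule.span R (b '' (s ∩ t)) = Submodule.span R (b '' s) ⊓ Submodule.span R (b '' t) := by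
  ext x
  simp only [Submodule.mem_inf, b.mem_span_image, Set.subset_inter_iff]

namespace DASL

variable (dasl : DASL B A ι D 𝒜)

lemma bas_nil : dasl.bas Std.nil = 1 := by
  rw [dasl.bas_eq]
  exact List.prod_nil

lemma prod_mem_graded :
    ∀ m : List (ι × ι), (∀ p ∈ m, p ∈ D) → ∃ n, m.length ≤ n ∧ (m.map dasl.emb).prod ∈ 𝒜 n
  | [], _ => ⟨0, le_rfl, by simpa using SetLike.one_mem_graded 𝒜⟩
  | p :: t, h => by
    obtain ⟨d, hd, hp⟩ := dasl.homog p (h p List.mem_cons_self)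
    obtain ⟨n, hn, ht⟩ := prod_mem_graded t fun q hq => h q (List.mem_cons_of_mem _ hq)
    refine ⟨d + n, by simp only [List.length_cons]; omega, ?_⟩
    rw [List.map_cons, List.prod_cons]
    exact SetLike.mul_mem_graded hp ht

lemma proj_zero_eq_repr_nil_smul (x : A) :
    GradedAlgebra.proj 𝒜 0 x = dasl.bas.repr x Std.nil • dasl.bas Std.nil := by
  suffices GradedAlgebra.proj 𝒜 0 = (dasl.bas.coord Std.nil).smulRight (dasl.bas Std.nil) by
    rw [this]; rfl
  refine dasl.bas.ext fun N => ?_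
  rw [GradedAlgebra.proj_apply, LinearMap.smulRight_apply, Module.Basis.coord_apply,
    Module.Basis.repr_self]
  rcases N.eq_nil_or_exists_cons with rfl | ⟨r, t, hN⟩
  · rw [dasl.bas_nil, DirectSum.decompose_of_mem_same 𝒜 (SetLike.one_mem_graded 𝒜)]
    simp
  · obtain ⟨n, hn, hmem⟩ := dasl.prod_mem_graded N.1 N.2.1
    have hNnil : N ≠ Std.nil := fun h => by simp [h, Std.nil] at hN
    rw [dasl.bas_eq, DirectSum.decompose_of_mem_ne 𝒜 hmem
      (by rw [hN, List.length_cons] at hn; omega), Finsupp.single_eq_of_ne' hNnil, zero_smul]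

lemma repr_nil_eq_zero_of_mem {x : A} {n : ℕ} (hn : n ≠ 0) (hx : x ∈ 𝒜 n) :
    dasl.bas.repr x Std.nil = 0 := by
  have h := dasl.proj_zero_eq_repr_nil_smul x
  rw [GradedAlgebra.proj_apply, DirectSum.decompose_of_mem_ne 𝒜 hx hn] at h
  simpa using congr(dasl.bas.repr $h.symm Std.nil)

lemma exists_head_le_of_repr_ne_zero {p : ι × ι} {m : List (ι × ι)}
    (hm : ∀ q ∈ p :: m, q ∈ D) {N : Std D}
    (hN : dasl.bas.repr (((p :: m).map dasl.emb).prod) N ≠ 0) :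
    ∃ r t, N.1 = r :: t ∧ r.1 ≤ p.1 := by
  rcases N.eq_nil_or_exists_cons with rfl | ⟨r, t, hNl⟩
  · obtain ⟨n, hn, hmem⟩ := dasl.prod_mem_graded _ hm
    exact absurd (dasl.repr_nil_eq_zero_of_mem (by rw [List.length_cons] at hn; omega) hmem) hN
  · have hlex := dasl.lex_cond _ hm N hN _ (List.Perm.refl _)
    rw [hNl, flat_cons, flat_cons] at hlex
    exact ⟨r, t, hNl, hlex.head_le⟩

variable {I : Set (ι × ι)}

lemma bas_mem_span_emb {N : Std D} (hN : N ∈ Std.headIn I) :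
    dasl.bas N ∈ Ideal.span (dasl.emb '' I) := by
  obtain ⟨q, t, hNl, hqI⟩ := hN
  rw [dasl.bas_eq, hNl, List.map_cons, List.prod_cons]
  exact Ideal.mul_mem_right _ _ (Ideal.subset_span ⟨q, hqI, rfl⟩)

variable (hID : I ⊆ D) (hIlow : ∀ p ∈ I, ∀ q ∈ D, q.1 ≤ p.1 → q ∈ I)
include hID hIlow

lemma emb_mul_bas_mem_span_headIn {p : ι × ι} (hp : p ∈ I) (M : Std D) :
    dasl.emb p * dasl.bas M ∈ Submodule.span B (dasl.bas '' Std.headIn I) := by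
  have hpM : ∀ q ∈ p :: M.1, q ∈ D := fun q hq =>
    (List.mem_cons.mp hq).elim (fun h => h ▸ hID hp) (M.2.1 q)
  rw [dasl.bas.mem_span_image]
  intro N hN
  rw [dasl.bas_eq, ← List.prod_cons, ← List.map_cons] at hN
  obtain ⟨r, t, hNl, hr⟩ := dasl.exists_head_le_of_repr_ne_zero hpM
    (Finsupp.mem_support_iff.mp hN)
  have hrD : r ∈ D := N.2.1 r (hNl ▸ List.mem_cons_self)
  exact ⟨r, t, hNl, hIlow p hp r hrD hr⟩

lemma emb_mul_mem_span_headIn {p : ι × ι} (hp : p ∈ I) (z : A) :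
    dasl.emb p * z ∈ Submodule.span B (dasl.bas '' Std.headIn I) := by
  have hspan : Submodule.span B (Set.range dasl.bas) ≤
      (Submodule.span B (dasl.bas '' Std.headIn I)).comap (LinearMap.mulLeft B (dasl.emb p)) := by
    rw [Submodule.span_le]
    rintro _ ⟨M, rfl⟩
    exact dasl.emb_mul_bas_mem_span_headIn hID hIlow hp M
  exact hspan (dasl.bas.span_eq ▸ Submodule.mem_top)

theorem restrictScalars_span_emb_eq :
    (Ideal.span (dasl.emb '' I)).restrictScalars B =
      Submodule.span B (dasl.bas '' Std.headIn I) := by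
  refine le_antisymm (fun x hx => ?_) ?_
  · obtain ⟨n, c, g, rfl⟩ := Submodule.mem_span_set'.mp hx
    refine Submodule.sum_mem _ fun i _ => ?_
    obtain ⟨p, hp, hpg⟩ := (g i).2
    rw [smul_eq_mul, ← hpg, mul_comm]
    exact dasl.emb_mul_mem_span_headIn hID hIlow hp _
  · rw [Submodule.span_le]
    rintro _ ⟨N, hN, rfl⟩
    exact dasl.bas_mem_span_emb hN

end DASL

end

theorem stmt_5 {B A ι : Type*} [CommRing B] [CommRing A] [Algebra B A]
    [PartialOrder ι] (D : Set (ι × ι)) (𝒜 : ℕ → Submodule B A) [GradedAlgebra 𝒜]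
    (dasl : DASL B A ι D 𝒜) (I J : Set (ι × ι)) (hID : I ⊆ D) (hJD : J ⊆ D)
    (hIlow : ∀ p ∈ I, ∀ q ∈ D, q.1 ≤ p.1 → q ∈ I)
    (hJlow : ∀ p ∈ J, ∀ q ∈ D, q.1 ≤ p.1 → q ∈ J) :
    Ideal.span (dasl.emb '' I) ⊓ Ideal.span (dasl.emb '' J) =
      Ideal.span (dasl.emb '' (I ∩ J)) := by
  have hIJlow : ∀ p ∈ I ∩ J, ∀ q ∈ D, q.1 ≤ p.1 → q ∈ I ∩ J := fun p hp q hq hqp =>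
    ⟨hIlow p hp.1 q hq hqp, hJlow p hp.2 q hq hqp⟩
  apply Submodule.restrictScalars_injective B
  rw [Submodule.restrictScalars_inf, dasl.restrictScalars_span_emb_eq hID hIlow,
    dasl.restrictScalars_span_emb_eq hJD hJlow,
    dasl.restrictScalars_span_emb_eq (Set.inter_subset_left.trans hID) hIJlow,
    Std.headIn_inter, dasl.bas.span_image_inter]
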